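/- Let ρ>0, φ∈(0,1), R>0, a>0 with R a^{ρφ}/(ρ^φ Γ(φ+1)) < 1. Suppose f : [0,a]×ℝ → ℝ is continuous and R-Lipschitz in its second argument, and c ∈ ℝ. Then there is a unique continuous u : [0,a] → ℝ with u(x) = c + (ρ^{1-φ}/Γ(φ)) ∫_0^x s^{ρ-1}(x^ρ−s^ρ)^{φ-1} f(s,u(s)) ds for all x ∈ [0,a]. -/

import Mathlib

/-!
The substitution `s = x τ` writes `I^{φ,ρ} g (x)` as `x ^ (ρ φ)` times an integral of `g (x τ)`
against the fixed integrable kernel `τ ^ (ρ - 1) (1 - τ ^ ρ) ^ (φ - 1)` on `[0, 1]`, so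
`x ↦ I^{φ,ρ} g (x)` is continuous by dominated convergence. The kernel has the explicit primitive
`-(x ^ ρ - s ^ ρ) ^ φ / (ρ φ)`, whence `I^{φ,ρ} 1 (x) = x ^ (ρ φ) / (ρ ^ φ Γ(φ + 1))`. Therefore
the Picard operator `u ↦ c + I^{φ,ρ} [f (·, u ·)]` on `C([0, a], ℝ)` is Lipschitz with constant
`R a ^ (ρ φ) / (ρ ^ φ Γ(φ + 1)) < 1`, and Banach's fixed-point theorem applies.
-/

open Real MeasureTheory Set intervalIntegral

noncomputable def katugampolaKernel (ρ φ x s : ℝ) : ℝ := s ^ (ρ - 1) * (x ^ ρ - s ^ ρ) ^ (φ - 1)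

/-- The Katugampola fractional integral `I^{φ,ρ} g (x)`. -/
noncomputable def katugampolaIntegral (ρ φ : ℝ) (g : ℝ → ℝ) (x : ℝ) : ℝ :=
  ρ ^ (1 - φ) / Gamma φ * ∫ s in (0:ℝ)..x, katugampolaKernel ρ φ x s * g s

section Kernel

variable {ρ φ x s : ℝ}

lemma katugampolaKernel_nonneg (hρ : 0 < ρ) (hs : 0 ≤ s) (hsx : s ≤ x) :
    0 ≤ katugampolaKernel ρ φ x s :=
  mul_nonneg (rpow_nonneg hs _)
    (rpow_nonneg (sub_nonneg.2 (rpow_le_rpow hs hsx hρ.le)) _)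

lemma hasDerivAt_katugampolaKernel_primitive (hρ : 0 < ρ) (hφ : 0 < φ) (hs : 0 < s)
    (hsx : s < x) :
    HasDerivAt (fun s => -(x ^ ρ - s ^ ρ) ^ φ / (ρ * φ)) (katugampolaKernel ρ φ x s) s := by
  have hpos : 0 < x ^ ρ - s ^ ρ := sub_pos.2 (rpow_lt_rpow hs.le hsx hρ)
  refine (((hasDerivAt_rpow_const (p := ρ) (Or.inl hs.ne')).const_sub (x ^ ρ)).rpow_const
    (p := φ) (Or.inl hpos.ne')).fun_neg.div_const (ρ * φ) |>.congr_deriv ?_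
  unfold katugampolaKernel
  field_simp

lemma continuousOn_katugampolaKernel_primitive (hρ : 0 < ρ) (hφ : 0 < φ) :
    ContinuousOn (fun s => -(x ^ ρ - s ^ ρ) ^ φ / (ρ * φ)) (Icc 0 x) := by
  refine (((continuousOn_const.sub ?_).rpow_const ?_).neg).div_const _
  · exact (continuous_rpow_const hρ.le).continuousOn
  · exact fun _ _ => Or.inr hφ.le

lemma intervalIntegrable_katugampolaKernel (hρ : 0 < ρ) (hφ : 0 < φ) (hx : 0 ≤ x) :
    IntervalIntegrable (katugampolaKernel ρ φ x) volume 0 x :=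
  (intervalIntegrable_iff_integrableOn_Ioc_of_le hx).2 <|
    integrableOn_deriv_of_nonneg (continuousOn_katugampolaKernel_primitive hρ hφ)
      (fun _ hs => hasDerivAt_katugampolaKernel_primitive hρ hφ hs.1 hs.2)
      (fun _ hs => katugampolaKernel_nonneg hρ hs.1.le hs.2.le)

lemma integral_katugampolaKernel (hρ : 0 < ρ) (hφ : 0 < φ) (hx : 0 ≤ x) :
    ∫ s in (0:ℝ)..x, katugampolaKernel ρ φ x s = x ^ (ρ * φ) / (ρ * φ) := by
  rw [integral_eq_sub_of_hasDerivAt_of_le hx (continuousOn_katugampolaKernel_primitive hρ hφ)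
    (fun _ hs => hasDerivAt_katugampolaKernel_primitive hρ hφ hs.1 hs.2)
    (intervalIntegrable_katugampolaKernel hρ hφ hx)]
  simp [zero_rpow hρ.ne', zero_rpow hφ.ne', rpow_mul hx, neg_div]

lemma katugampolaKernel_self_mul (hρ : 0 < ρ) (hx : 0 < x) {τ : ℝ} (hτ : τ ∈ Icc (0:ℝ) 1) :
    katugampolaKernel ρ φ x (x * τ) = x ^ (ρ * φ - 1) * katugampolaKernel ρ φ 1 τ := by
  have h1τ : 0 ≤ 1 - τ ^ ρ := sub_nonneg.2 (rpow_le_one hτ.1 hτ.2 hρ.le)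
  have hsplit : x ^ ρ - (x * τ) ^ ρ = x ^ ρ * (1 - τ ^ ρ) := by
    rw [mul_rpow hx.le hτ.1]; ring
  have hpow : x ^ (ρ * φ - 1) = x ^ (ρ - 1) * x ^ (ρ * (φ - 1)) := by
    rw [← rpow_add hx]; ring_nf
  unfold katugampolaKernel
  rw [hsplit, mul_rpow hx.le hτ.1, mul_rpow (rpow_nonneg hx.le _) h1τ, ← rpow_mul hx.le, one_rpow,
    hpow]
  ring

lemma integral_katugampolaKernel_mul_eq_rpow_mul (hρ : 0 < ρ) (hφ : 0 < φ) (hx : 0 ≤ x)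
    (g : ℝ → ℝ) :
    ∫ s in (0:ℝ)..x, katugampolaKernel ρ φ x s * g s =
      x ^ (ρ * φ) * ∫ τ in (0:ℝ)..1, katugampolaKernel ρ φ 1 τ * g (x * τ) := by
  rcases hx.eq_or_lt with rfl | hx
  · simp [zero_rpow (mul_pos hρ hφ).ne']
  calc ∫ s in (0:ℝ)..x, katugampolaKernel ρ φ x s * g s
      = x * ∫ τ in (0:ℝ)..1, katugampolaKernel ρ φ x (x * τ) * g (x * τ) := by
        simpa using (smul_integral_comp_mul_left
          (fun s => katugampolaKernel ρ φ x s * g s) x (a := 0) (b := 1)).symm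
    _ = x * ∫ τ in (0:ℝ)..1, x ^ (ρ * φ - 1) * (katugampolaKernel ρ φ 1 τ * g (x * τ)) := by
        congr 1
        refine integral_congr fun τ hτ => ?_
        rw [uIcc_of_le zero_le_one] at hτ
        rw [katugampolaKernel_self_mul hρ hx hτ, mul_assoc]
    _ = x ^ (ρ * φ) * ∫ τ in (0:ℝ)..1, katugampolaKernel ρ φ 1 τ * g (x * τ) := by
        rw [intervalIntegral.integral_const_mul, rpow_sub_one hx.ne']
        field_simp

lemma continuous_integral_katugampolaKernel_one_mul (hρ : 0 < ρ) (hφ : 0 < φ) {G : ℝ → ℝ}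
    (hG : Continuous G) {M : ℝ} (hM : ∀ s, |G s| ≤ M) :
    Continuous fun x => ∫ τ in (0:ℝ)..1, katugampolaKernel ρ φ 1 τ * G (x * τ) := by
  have hk := intervalIntegrable_katugampolaKernel hρ hφ zero_le_one
  refine continuous_of_dominated_interval (bound := fun τ => M * katugampolaKernel ρ φ 1 τ)
    (fun x => ?_) (fun x => ae_of_all _ fun τ hτ => ?_) (hk.const_mul M)
    (ae_of_all _ fun τ _ => by fun_prop)
  · rw [uIoc_of_le zero_le_one]
    exact (hk.mul_continuousOn (by fun_prop : Continuous fun τ => G (x * τ)).continuousOn).1.1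
  · rw [uIoc_of_le zero_le_one] at hτ
    have hkτ := katugampolaKernel_nonneg (φ := φ) hρ hτ.1.le hτ.2
    rw [norm_mul, Real.norm_of_nonneg hkτ, mul_comm M]
    exact mul_le_mul_of_nonneg_left (hM _) hkτ

end Kernel

section KatugampolaIntegral

variable {ρ φ x : ℝ} {g g₁ g₂ : ℝ → ℝ}

lemma katugampolaIntegral_congr (hx : 0 ≤ x) (h : EqOn g₁ g₂ (Icc 0 x)) :
    katugampolaIntegral ρ φ g₁ x = katugampolaIntegral ρ φ g₂ x := by
  unfold katugampolaIntegral
  congr 1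
  refine integral_congr fun s hs => ?_
  rw [uIcc_of_le hx] at hs
  simp only [h hs]

lemma katugampolaIntegral_sub (hρ : 0 < ρ) (hφ : 0 < φ) (hx : 0 ≤ x)
    (hg₁ : ContinuousOn g₁ (Icc 0 x)) (hg₂ : ContinuousOn g₂ (Icc 0 x)) :
    katugampolaIntegral ρ φ (fun s => g₁ s - g₂ s) x =
      katugampolaIntegral ρ φ g₁ x - katugampolaIntegral ρ φ g₂ x := by
  have hk := intervalIntegrable_katugampolaKernel (φ := φ) hρ hφ hx
  rw [← uIcc_of_le hx] at hg₁ hg₂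
  unfold katugampolaIntegral
  rw [← mul_sub, ← integral_sub (hk.mul_continuousOn hg₁) (hk.mul_continuousOn hg₂)]
  simp only [mul_sub]

lemma abs_katugampolaIntegral_le (hρ : 0 < ρ) (hφ : 0 < φ) (hx : 0 ≤ x) {M : ℝ}
    (hg : ∀ s ∈ Icc 0 x, |g s| ≤ M) :
    |katugampolaIntegral ρ φ g x| ≤ M * x ^ (ρ * φ) / (ρ ^ φ * Gamma (φ + 1)) := by
  have hΓ := Gamma_pos_of_pos hφ
  have hintegral : |∫ s in (0:ℝ)..x, katugampolaKernel ρ φ x s * g s| ≤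
      M * (x ^ (ρ * φ) / (ρ * φ)) := by
    rw [← integral_katugampolaKernel hρ hφ hx, ← intervalIntegral.integral_const_mul,
      ← Real.norm_eq_abs]
    refine norm_integral_le_of_norm_le hx (ae_of_all _ fun s hs => ?_)
      ((intervalIntegrable_katugampolaKernel hρ hφ hx).const_mul M)
    have hks := katugampolaKernel_nonneg (φ := φ) hρ hs.1.le hs.2
    rw [norm_mul, Real.norm_of_nonneg hks, mul_comm M]
    exact mul_le_mul_of_nonneg_left (hg s (Ioc_subset_Icc_self hs)) hks
  calc |katugampolaIntegral ρ φ g x|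
      = ρ ^ (1 - φ) / Gamma φ * |∫ s in (0:ℝ)..x, katugampolaKernel ρ φ x s * g s| := by
        rw [katugampolaIntegral, abs_mul, abs_of_pos (by positivity)]
    _ ≤ ρ ^ (1 - φ) / Gamma φ * (M * (x ^ (ρ * φ) / (ρ * φ))) := by gcongr
    _ = M * x ^ (ρ * φ) / (ρ ^ φ * Gamma (φ + 1)) := by
        rw [Gamma_add_one hφ.ne', rpow_sub hρ, rpow_one]
        field_simp

lemma continuousOn_katugampolaIntegral (hρ : 0 < ρ) (hφ : 0 < φ) {a : ℝ}
    (hg : ContinuousOn g (Icc 0 a)) : ContinuousOn (katugampolaIntegral ρ φ g) (Icc 0 a) := by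
  rcases lt_or_ge a 0 with ha | ha
  · simp [Icc_eq_empty_of_lt ha]
  -- dominated convergence needs an integrand that is continuous and bounded on all of `ℝ`
  obtain ⟨M, hM⟩ := isCompact_Icc.exists_bound_of_continuousOn hg
  set G := IccExtend ha ((Icc 0 a).domRestrict g)
  have hG : Continuous G := hg.domRestrict.Icc_extend'
  have hGM : ∀ s, |G s| ≤ M := fun s => hM _ (projIcc 0 a ha s).2
  have hGg : EqOn G g (Icc 0 a) := fun s hs => IccExtend_of_mem ha _ hs
  refine ContinuousOn.congr (f := fun x => ρ ^ (1 - φ) / Gamma φ *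
      (x ^ (ρ * φ) * ∫ τ in (0:ℝ)..1, katugampolaKernel ρ φ 1 τ * G (x * τ))) ?_ fun x hx => ?_
  · exact (continuousOn_const.mul ((continuous_rpow_const (mul_pos hρ hφ).le).mul
      (continuous_integral_katugampolaKernel_one_mul hρ hφ hG hGM)).continuousOn)
  · rw [katugampolaIntegral_congr hx.1 ((hGg.mono (Icc_subset_Icc_right hx.2)).symm),
      katugampolaIntegral, integral_katugampolaKernel_mul_eq_rpow_mul hρ hφ hx.1]

end KatugampolaIntegral

section Picard

variable {ρ φ R a : ℝ} (hρ : 0 < ρ) (hφ : 0 < φ) (ha : 0 ≤ a) {f : ℝ → ℝ → ℝ}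
  (hf : Continuous fun p : ℝ × ℝ => f p.1 p.2) (c : ℝ)

noncomputable def katugampolaPicard (v : C(Icc 0 a, ℝ)) : C(Icc 0 a, ℝ) where
  toFun t := c + katugampolaIntegral ρ φ (fun s => f s (IccExtend ha v s)) t
  continuous_toFun := (continuousOn_const.add (continuousOn_katugampolaIntegral hρ hφ
    (hf.comp₂ continuous_id v.continuous.Icc_extend').continuousOn)).domRestrict

lemma katugampolaPicard_apply (v : C(Icc 0 a, ℝ)) (t : Icc 0 a) :
    katugampolaPicard hρ hφ ha hf c v t =
      c + katugampolaIntegral ρ φ (fun s => f s (IccExtend ha v s)) t :=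
  rfl

lemma katugampolaPicard_apply_of_eq {v : C(Icc 0 a, ℝ)} {u : ℝ → ℝ}
    (huv : ∀ t : Icc 0 a, u t = v t) (t : Icc 0 a) :
    katugampolaPicard hρ hφ ha hf c v t = c + katugampolaIntegral ρ φ (fun s => f s (u s)) t := by
  refine (katugampolaPicard_apply hρ hφ ha hf c v t).trans <|
    congrArg (c + ·) (katugampolaIntegral_congr t.2.1 fun s hs => ?_)
  have hsa : s ∈ Icc 0 a := ⟨hs.1, hs.2.trans t.2.2⟩
  simp only [IccExtend_of_mem ha _ hsa, huv ⟨s, hsa⟩]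

lemma lipschitzWith_katugampolaPicard (hR : 0 ≤ R)
    (hLip : ∀ x u v : ℝ, |f x u - f x v| ≤ R * |u - v|) :
    LipschitzWith (R * a ^ (ρ * φ) / (ρ ^ φ * Gamma (φ + 1))).toNNReal
      (katugampolaPicard hρ hφ ha hf c) := by
  refine LipschitzWith.of_dist_le' fun u v => ?_
  have hΓ := Gamma_pos_of_pos (add_pos hφ one_pos)
  refine (ContinuousMap.dist_le (by positivity)).2 fun t => ?_
  have hcont : ∀ w : C(Icc 0 a, ℝ), ContinuousOn (fun s => f s (IccExtend ha w s)) (Icc 0 t) :=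
    fun w => (hf.comp₂ continuous_id w.continuous.Icc_extend').continuousOn
  have hdiff : ∀ s ∈ Icc 0 (t : ℝ),
      |f s (IccExtend ha u s) - f s (IccExtend ha v s)| ≤ R * dist u v := fun s _ =>
    (hLip _ _ _).trans <| mul_le_mul_of_nonneg_left
      (by rw [← Real.dist_eq]; exact ContinuousMap.dist_apply_le_dist _) hR
  calc dist (katugampolaPicard hρ hφ ha hf c u t) (katugampolaPicard hρ hφ ha hf c v t)
      = |katugampolaIntegral ρ φ (fun s => f s (IccExtend ha u s) - f s (IccExtend ha v s)) t| := by
        rw [Real.dist_eq, katugampolaPicard_apply, katugampolaPicard_apply,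
          add_sub_add_left_eq_sub, katugampolaIntegral_sub hρ hφ t.2.1 (hcont u) (hcont v)]
    _ ≤ R * dist u v * (t : ℝ) ^ (ρ * φ) / (ρ ^ φ * Gamma (φ + 1)) :=
        abs_katugampolaIntegral_le hρ hφ t.2.1 hdiff
    _ ≤ R * dist u v * a ^ (ρ * φ) / (ρ ^ φ * Gamma (φ + 1)) := by
        gcongr
        · exact t.2.1
        · exact t.2.2
    _ = R * a ^ (ρ * φ) / (ρ ^ φ * Gamma (φ + 1)) * dist u v := by ring

end Picard

theorem one_dim_fixed_point (ρ φ R a : ℝ)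
    (hρ : 0 < ρ) (hφ : φ ∈ Set.Ioo (0:ℝ) 1) (hR : 0 < R) (ha : 0 < a)
    (hΞ : R * a ^ (ρ * φ) / (ρ ^ φ * Real.Gamma (φ + 1)) < 1)
    (f : ℝ → ℝ → ℝ)
    (hf : Continuous (fun p : ℝ × ℝ => f p.1 p.2))
    (hLip : ∀ x u v : ℝ, |f x u - f x v| ≤ R * |u - v|)
    (c : ℝ) :
    ∃ u : ℝ → ℝ,
      (ContinuousOn u (Set.Icc 0 a) ∧
        ∀ x ∈ Set.Icc (0:ℝ) a,
          u x = c + ρ ^ (1 - φ) / Real.Gamma φ *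
            ∫ s in (0:ℝ)..x, s ^ (ρ - 1) * (x ^ ρ - s ^ ρ) ^ (φ - 1) * f s (u s)) ∧
      ∀ u' : ℝ → ℝ,
        (ContinuousOn u' (Set.Icc 0 a) ∧
          ∀ x ∈ Set.Icc (0:ℝ) a,
            u' x = c + ρ ^ (1 - φ) / Real.Gamma φ *
              ∫ s in (0:ℝ)..x, s ^ (ρ - 1) * (x ^ ρ - s ^ ρ) ^ (φ - 1) * f s (u' s)) →
        ∀ x ∈ Set.Icc (0:ℝ) a, u' x = u x := by
  set T := katugampolaPicard hρ hφ.1 ha.le hf c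
  have hT : ContractingWith _ T :=
    ⟨Real.toNNReal_lt_one.2 hΞ, lipschitzWith_katugampolaPicard hρ hφ.1 ha.le hf c hR.le hLip⟩
  obtain ⟨v₀, hv₀⟩ : ∃ v, Function.IsFixedPt T v := ⟨_, hT.fixedPoint_isFixedPt⟩
  refine ⟨IccExtend ha.le v₀, ⟨v₀.continuous.Icc_extend'.continuousOn, fun x hx => ?_⟩, ?_⟩
  · rw [IccExtend_of_mem ha.le _ hx]
    exact (DFunLike.congr_fun hv₀ ⟨x, hx⟩).symm
  · rintro u' ⟨hu'_cont, hu'_eq⟩ x hx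
    set v' : C(Icc 0 a, ℝ) := ⟨(Icc 0 a).domRestrict u', hu'_cont.domRestrict⟩
    have hv' : Function.IsFixedPt T v' := by
      ext t
      rw [katugampolaPicard_apply_of_eq hρ hφ.1 ha.le hf c (fun _ => rfl)]
      exact (hu'_eq t t.2).symm
    rw [IccExtend_of_mem ha.le _ hx, ← hT.fixedPoint_unique' hv' hv₀]
    rfl
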